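/- Let s ≥ 3, let u₁,…,u_{s−2} be nonzero real numbers, let L = {x ∈ ℝ^s : u₁x₁ + … + u_{s−2}x_{s−2} + x_{s−1} = 0}, and let S_L be the convex cone of quadratic forms Q(x) = a₁x₁² + … + a_{s−2}x_{s−2}² + (m/2)(x_{s−1}² − x_s²) − t·x_{s−1}x_s (with a_i, m, t ∈ ℝ) that are positive semidefinite on L. If Q spans an extreme ray of S_L, then either Q = a_ix_i² for some i ≤ s−2 with a_i > 0, or all a_i are positive, m < 0, and 2m/(m² + t²) + Σᵢ u_i²/a_i = 0. Conversely, every form of this shape with all a_i > 0, m < 0 and 2m/(m² + t²) + Σᵢ u_i²/a_i = 0 is positive semidefinite on L and spans an extreme ray of S_L. -/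

import Mathlib

/-- The quadratic form Q(x) = a₁x₁² + … + a_{s−2}x_{s−2}² + (m/2)(x_{s−1}² − x_s²) − t·x_{s−1}x_s
on ℝ^s (the last two coordinates of x are x_{s−1} and x_s). -/
noncomputable def Q19 (s : ℕ) (hs : 3 ≤ s) (a : Fin (s - 2) → ℝ) (m t : ℝ) : (Fin s → ℝ) → ℝ :=
  fun x =>
    (∑ i, a i * x (Fin.castLE (Nat.sub_le s 2) i) ^ 2) +
    m / 2 * (x ⟨s - 2, by omega⟩ ^ 2 - x ⟨s - 1, by omega⟩ ^ 2) -
    t * (x ⟨s - 2, by omega⟩ * x ⟨s - 1, by omega⟩)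

/-- Membership in the hyperplane L = {x ∈ ℝ^s : u₁x₁ + … + u_{s−2}x_{s−2} + x_{s−1} = 0}. -/
def L19 (s : ℕ) (hs : 3 ≤ s) (u : Fin (s - 2) → ℝ) (x : Fin s → ℝ) : Prop :=
  (∑ i, u i * x (Fin.castLE (Nat.sub_le s 2) i)) + x ⟨s - 2, by omega⟩ = 0

/-- The form Q19 with parameters (a, m, t) is positive semidefinite on L. -/
def PSD19 (s : ℕ) (hs : 3 ≤ s) (u : Fin (s - 2) → ℝ) (a : Fin (s - 2) → ℝ) (m t : ℝ) : Prop :=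
  ∀ x : Fin s → ℝ, L19 s hs u x → 0 ≤ Q19 s hs a m t x

/-- The form Q19 with parameters (a, m, t) spans an extreme ray of the cone S_L of forms of
this shape that are positive semidefinite on L. -/
def ExtremeRay19 (s : ℕ) (hs : 3 ≤ s) (u : Fin (s - 2) → ℝ)
    (a : Fin (s - 2) → ℝ) (m t : ℝ) : Prop :=
  Q19 s hs a m t ≠ 0 ∧ PSD19 s hs u a m t ∧
  ∀ (a₁ : Fin (s - 2) → ℝ) (m₁ t₁ : ℝ) (a₂ : Fin (s - 2) → ℝ) (m₂ t₂ : ℝ),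
    PSD19 s hs u a₁ m₁ t₁ → PSD19 s hs u a₂ m₂ t₂ →
    (∀ x, Q19 s hs a m t x = Q19 s hs a₁ m₁ t₁ x + Q19 s hs a₂ m₂ t₂ x) →
    (∃ c : ℝ, 0 ≤ c ∧ ∀ x, Q19 s hs a₁ m₁ t₁ x = c * Q19 s hs a m t x) ∧
    (∃ c : ℝ, 0 ≤ c ∧ ∀ x, Q19 s hs a₂ m₂ t₂ x = c * Q19 s hs a m t x)

/-!
On `L` the coordinate `x_{s-1}` is `-∑ uᵢxᵢ`; minimising over `x_s` and applying Cauchy–Schwarz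
shows that `Q` is nonnegative on `L` iff either `m = t = 0` and all `aᵢ ≥ 0`, or `m < 0`, all
`aᵢ > 0` and `2m + σ(m² + t²) ≤ 0`, where `σ = ∑ uᵢ²/aᵢ`. In the first family only the forms
`aᵢxᵢ²` are extreme. In the second, if the inequality is strict, `Q` is the sum of the diagonal form
`(1 - κ) ∑ aᵢxᵢ²` and the form with `a` replaced by `κa`, which lies on the boundary for the right
`κ ∈ (0, 1)`. A boundary form vanishes at a point `v ∈ L`, so every summand `Q₁` nonnegative on `L`
vanishes at `v` too; then the polar form of `Q₁` kills `v` against all of `L`, and testing this on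
the directions `(0, 0, 1)` and `(eᵢ, -uᵢ, 0)` makes the parameters of `Q₁` proportional to those
of `Q`.
-/

open Finset

section Form

variable {ι : Type*} [Fintype ι]

noncomputable def quadForm (a : ι → ℝ) (m t : ℝ) (c : ι → ℝ) (y z : ℝ) : ℝ :=
  ∑ i, a i * c i ^ 2 + m / 2 * (y ^ 2 - z ^ 2) - t * (y * z)

noncomputable def polarForm (a : ι → ℝ) (m t : ℝ) (c : ι → ℝ) (y z : ℝ) (c' : ι → ℝ)
    (y' z' : ℝ) : ℝ :=
  ∑ i, a i * c i * c' i + m / 2 * (y * y' - z * z') - t / 2 * (y * z' + y' * z)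

def NonnegOnHyperplane (u a : ι → ℝ) (m t : ℝ) : Prop :=
  ∀ c y z, ∑ i, u i * c i + y = 0 → 0 ≤ quadForm a m t c y z

variable {u a a₁ a₂ c c' : ι → ℝ} {m m₁ m₂ t t₁ t₂ y y' z z' : ℝ}

lemma quadForm_add_smul (r : ℝ) :
    quadForm a m t (c + r • c') (y + r * y') (z + r * z') =
      quadForm a m t c y z + 2 * r * polarForm a m t c y z c' y' z' +
        r ^ 2 * quadForm a m t c' y' z' := by
  have hsum : ∑ i, a i * (c + r • c') i ^ 2 =
      ∑ i, a i * c i ^ 2 + 2 * r * ∑ i, a i * c i * c' i + r ^ 2 * ∑ i, a i * c' i ^ 2 := by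
    simp only [Pi.add_apply, Pi.smul_apply, smul_eq_mul, mul_sum, ← sum_add_distrib]
    exact sum_congr rfl fun i _ => by ring
  simp only [quadForm, polarForm, hsum]
  ring

lemma quadForm_add :
    quadForm (a₁ + a₂) (m₁ + m₂) (t₁ + t₂) c y z =
      quadForm a₁ m₁ t₁ c y z + quadForm a₂ m₂ t₂ c y z := by
  simp only [quadForm, Pi.add_apply, add_mul, sum_add_distrib]
  ring

lemma quadForm_smul (k : ℝ) :
    quadForm (k • a) (k * m) (k * t) c y z = k * quadForm a m t c y z := by
  simp only [quadForm, Pi.smul_apply, smul_eq_mul, mul_assoc, ← mul_sum]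
  ring

@[simp]
lemma quadForm_zero_left : quadForm a m t 0 y z = m / 2 * (y ^ 2 - z ^ 2) - t * (y * z) := by
  simp [quadForm]

@[simp]
lemma quadForm_single [DecidableEq ι] (i : ι) :
    quadForm a m t (Pi.single i 1) y z = a i + m / 2 * (y ^ 2 - z ^ 2) - t * (y * z) := by
  simp [quadForm, Pi.single_apply]

@[simp]
lemma polarForm_zero_right :
    polarForm a m t c y z 0 y' z' = m / 2 * (y * y' - z * z') - t / 2 * (y * z' + y' * z) := by
  simp [polarForm]

@[simp]
lemma polarForm_single_right [DecidableEq ι] (i : ι) :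
    polarForm a m t c y z (Pi.single i 1) y' z' =
      a i * c i + m / 2 * (y * y' - z * z') - t / 2 * (y * z' + y' * z) := by
  simp [polarForm, Pi.single_apply]

lemma sum_mul_mul_div (m : ℝ) : ∑ i, u i * (m * u i / a i) = m * ∑ i, u i ^ 2 / a i := by
  rw [mul_sum]
  exact sum_congr rfl fun i _ => by ring

lemma sum_sq_div_pos [Nonempty ι] (hu : ∀ i, u i ≠ 0) (ha : ∀ i, 0 < a i) :
    0 < ∑ i, u i ^ 2 / a i :=
  sum_pos (fun i _ => div_pos (pow_two_pos_of_ne_zero (hu i)) (ha i)) univ_nonempty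

lemma quadForm_kernel (ha : ∀ i, a i ≠ 0) :
    quadForm a m t (fun i => m * u i / a i) (-(m * ∑ i, u i ^ 2 / a i))
        ((∑ i, u i ^ 2 / a i) * t) =
      m * (∑ i, u i ^ 2 / a i) / 2 * (2 * m + (∑ i, u i ^ 2 / a i) * (m ^ 2 + t ^ 2)) := by
  have hsum : ∑ i, a i * (m * u i / a i) ^ 2 = m ^ 2 * ∑ i, u i ^ 2 / a i := by
    rw [mul_sum]
    exact sum_congr rfl fun i _ => by field_simp [ha i]
  rw [quadForm, hsum]
  ring

namespace NonnegOnHyperplane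

lemma polarForm_eq_zero (h : NonnegOnHyperplane u a m t) (hv : ∑ i, u i * c i + y = 0)
    (hw : ∑ i, u i * c' i + y' = 0) (h0 : quadForm a m t c y z = 0) :
    polarForm a m t c y z c' y' z' = 0 := by
  have hd := discrim_le_zero (a := quadForm a m t c' y' z')
    (b := 2 * polarForm a m t c y z c' y' z') (c := 0) fun r => by
      have := h (c + r • c') (y + r * y') (z + r * z') (by
        simp only [Pi.add_apply, Pi.smul_apply, smul_eq_mul, mul_add, sum_add_distrib,
          mul_left_comm _ r, ← mul_sum]
        linear_combination hv + r * hw)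
      rw [quadForm_add_smul, h0] at this
      linarith
  rw [discrim] at hd
  nlinarith

lemma m_nonpos (h : NonnegOnHyperplane u a m t) : m ≤ 0 := by
  have := h 0 0 1 (by simp)
  simp only [quadForm_zero_left] at this
  linarith

lemma apply_single_nonneg (h : NonnegOnHyperplane u a m t) (i : ι) (z : ℝ) :
    0 ≤ a i + m / 2 * (u i ^ 2 - z ^ 2) + t * u i * z := by
  classical
  have := h (Pi.single i 1) (-u i) z (by simp [Pi.single_apply])
  simp only [quadForm_single] at this
  linarith

end NonnegOnHyperplane

lemma nonnegOnHyperplane_of_nonneg (ha : ∀ i, 0 ≤ a i) : NonnegOnHyperplane u a 0 0 := by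
  intro c y z _
  simpa [quadForm] using sum_nonneg fun i _ => mul_nonneg (ha i) (sq_nonneg (c i))

lemma nonnegOnHyperplane_of_neg [Nonempty ι] (hu : ∀ i, u i ≠ 0) (ha : ∀ i, 0 < a i)
    (hm : m < 0) (hb : 2 * m + (∑ i, u i ^ 2 / a i) * (m ^ 2 + t ^ 2) ≤ 0) :
    NonnegOnHyperplane u a m t := by
  intro c y z hy
  set σ := ∑ i, u i ^ 2 / a i
  set w := ∑ i, u i * c i
  set S := ∑ i, a i * c i ^ 2
  have hσ : 0 < σ := sum_sq_div_pos hu ha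
  have hcs : w ^ 2 ≤ σ * S :=
    sum_sq_le_sum_mul_sum_of_sq_le_mul _ (fun i _ => div_nonneg (sq_nonneg _) (ha i).le)
      (fun i _ => mul_nonneg (ha i).le (sq_nonneg _))
      fun i _ => le_of_eq (by field_simp [(ha i).ne'])
  have hsq : -2 * m * quadForm a m t c y z =
      -2 * m * S - (m ^ 2 + t ^ 2) * w ^ 2 + (m * z - t * w) ^ 2 := by
    rw [quadForm, show y = -w by linarith]
    ring
  have : 0 ≤ σ * (-2 * m * quadForm a m t c y z) := by
    rw [hsq]
    nlinarith [sq_nonneg (m * z - t * w), mul_le_mul_of_nonneg_left hcs (by linarith : 0 ≤ -2 * m),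
      mul_le_mul_of_nonneg_right hb (sq_nonneg w)]
  nlinarith [nonneg_of_mul_nonneg_right this hσ]

lemma nonnegOnHyperplane_iff [Nonempty ι] (hu : ∀ i, u i ≠ 0) :
    NonnegOnHyperplane u a m t ↔ (m = 0 ∧ t = 0 ∧ ∀ i, 0 ≤ a i) ∨
      ((∀ i, 0 < a i) ∧ m < 0 ∧ 2 * m + (∑ i, u i ^ 2 / a i) * (m ^ 2 + t ^ 2) ≤ 0) := by
  refine ⟨fun h => ?_, ?_⟩
  · rcases h.m_nonpos.lt_or_eq with hm | rfl
    · have ha (i : ι) : 0 < a i := by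
        nlinarith [h.apply_single_nonneg i 0, pow_two_pos_of_ne_zero (hu i)]
      have hσ := sum_sq_div_pos hu ha
      have hv := h (fun i => m * u i / a i) (-(m * ∑ i, u i ^ 2 / a i))
        ((∑ i, u i ^ 2 / a i) * t) (by rw [sum_mul_mul_div]; ring)
      rw [quadForm_kernel fun i => (ha i).ne'] at hv
      exact Or.inr ⟨ha, hm, nonpos_of_mul_nonneg_right hv (by nlinarith)⟩
    · obtain ⟨i⟩ := ‹Nonempty ι›
      have hti : t * u i = 0 := by
        have := discrim_le_zero (a := 0) (b := t * u i) (c := a i) fun z => by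
          nlinarith [h.apply_single_nonneg i z]
        rw [discrim] at this
        nlinarith
      obtain rfl : t = 0 := (mul_eq_zero.1 hti).resolve_right (hu i)
      exact Or.inl ⟨rfl, rfl, fun j => by simpa using h.apply_single_nonneg j 0⟩
  · rintro (⟨rfl, rfl, ha⟩ | ⟨ha, hm, hb⟩)
    exacts [nonnegOnHyperplane_of_nonneg ha, nonnegOnHyperplane_of_neg hu ha hm hb]

lemma NonnegOnHyperplane.eq_smul_of_kernel [Nonempty ι] (hu : ∀ i, u i ≠ 0)
    (ha : ∀ i, 0 < a i) (hm : m < 0) (hb : 2 * m + (∑ i, u i ^ 2 / a i) * (m ^ 2 + t ^ 2) = 0)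
    (h : NonnegOnHyperplane u a₁ m₁ t₁)
    (hv : quadForm a₁ m₁ t₁ (fun i => m * u i / a i) (-(m * ∑ i, u i ^ 2 / a i))
      ((∑ i, u i ^ 2 / a i) * t) = 0) :
    ∃ k, 0 ≤ k ∧ a₁ = k • a ∧ m₁ = k * m ∧ t₁ = k * t := by
  classical
  set σ := ∑ i, u i ^ 2 / a i
  have hσ : 0 < σ := sum_sq_div_pos hu ha
  have hL : ∑ i, u i * (m * u i / a i) + -(m * σ) = 0 := by rw [sum_mul_mul_div]; ring
  have ht : t₁ * m = m₁ * t := by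
    have hz := h.polarForm_eq_zero (c' := 0) (y' := 0) (z' := 1) hL (by simp) hv
    simp only [polarForm_zero_right] at hz
    nlinarith
  have ha₁ (i : ι) : a₁ i * m = m₁ * a i := by
    have hi := h.polarForm_eq_zero (c' := Pi.single i 1) (y' := -u i) (z' := 0) hL
      (by simp [Pi.single_apply]) hv
    simp only [polarForm_single_right] at hi
    field_simp [(ha i).ne'] at hi
    have : 2 * u i * m * (a₁ i * m - m₁ * a i) = 0 := by
      linear_combination m * hi - (u i * a i * σ * t) * ht - (u i * a i * m₁) * hb
    linarith [(mul_eq_zero.1 this).resolve_left (by simp [hu i, hm.ne])]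
  refine ⟨m₁ / m, div_nonneg_of_nonpos h.m_nonpos hm.le, ?_, by field_simp [hm.ne], ?_⟩
  · ext i
    rw [Pi.smul_apply, smul_eq_mul, div_mul_eq_mul_div, eq_div_iff hm.ne, ha₁ i]
  · rw [div_mul_eq_mul_div, eq_div_iff hm.ne, ht]

lemma sum_sq_div_smul (κ : ℝ) : ∑ i, u i ^ 2 / (κ • a) i = (∑ i, u i ^ 2 / a i) / κ := by
  simp only [Pi.smul_apply, smul_eq_mul, div_mul_eq_div_div_swap, sum_div]

end Form

lemma two_mul_div_add_eq_zero_iff {m t : ℝ} (hm : m ≠ 0) (σ : ℝ) :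
    2 * m / (m ^ 2 + t ^ 2) + σ = 0 ↔ 2 * m + σ * (m ^ 2 + t ^ 2) = 0 := by
  have : m ^ 2 + t ^ 2 ≠ 0 := by positivity
  rw [div_add' _ _ _ this, div_eq_zero_iff, or_iff_left this]

noncomputable def point19 (s : ℕ) (c : Fin (s - 2) → ℝ) (y z : ℝ) : Fin s → ℝ :=
  fun k => if h : (k : ℕ) < s - 2 then c ⟨k, h⟩ else if (k : ℕ) = s - 2 then y else z

section Coordinates

variable {s : ℕ} {hs : 3 ≤ s} {u a a₁ a₂ : Fin (s - 2) → ℝ} {m m₁ m₂ t t₁ t₂ : ℝ}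

lemma Q19_point19 (c : Fin (s - 2) → ℝ) (y z : ℝ) :
    Q19 s hs a m t (point19 s c y z) = quadForm a m t c y z := by
  have h₁ : ¬ s - 1 < s - 2 := by omega
  have h₂ : ¬ s - 1 = s - 2 := by omega
  simp [Q19, quadForm, point19, h₁, h₂]

lemma L19_point19 (c : Fin (s - 2) → ℝ) (y z : ℝ) :
    L19 s hs u (point19 s c y z) ↔ ∑ i, u i * c i + y = 0 := by
  simp [L19, point19]

lemma psd19_iff : PSD19 s hs u a m t ↔ NonnegOnHyperplane u a m t :=
  ⟨fun h c y z hL => Q19_point19 (hs := hs) c y z ▸ h _ ((L19_point19 c y z).2 hL),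
    fun h _ hL => h _ _ _ hL⟩

lemma Q19_add (x : Fin s → ℝ) :
    Q19 s hs (a₁ + a₂) (m₁ + m₂) (t₁ + t₂) x = Q19 s hs a₁ m₁ t₁ x + Q19 s hs a₂ m₂ t₂ x :=
  quadForm_add

lemma Q19_smul (k : ℝ) (x : Fin s → ℝ) :
    Q19 s hs (k • a) (k * m) (k * t) x = k * Q19 s hs a m t x :=
  quadForm_smul k

lemma ExtremeRay19.exists_single (h : ExtremeRay19 s hs u a 0 0) (ha : ∀ i, 0 ≤ a i) :
    ∃ i, 0 < a i ∧ ∀ j, j ≠ i → a j = 0 := by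
  classical
  obtain ⟨hne, -, hext⟩ := h
  obtain ⟨i, hi⟩ : ∃ i, a i ≠ 0 := by
    by_contra! h0
    exact hne (funext fun x => by simp [Q19, h0])
  have hsplit (x : Fin s → ℝ) : Q19 s hs a 0 0 x =
      Q19 s hs (Pi.single i (a i)) 0 0 x + Q19 s hs (a - Pi.single i (a i)) 0 0 x := by
    rw [← Q19_add, add_sub_cancel, add_zero]
  have hpsd {b : Fin (s - 2) → ℝ} (hb : ∀ j, 0 ≤ b j) : PSD19 s hs u b 0 0 :=
    psd19_iff.2 (nonnegOnHyperplane_of_nonneg hb)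
  obtain ⟨⟨k, -, hk⟩, -⟩ := hext _ 0 0 _ 0 0
    (hpsd fun j => by by_cases hj : j = i <;> simp [hj, ha])
    (hpsd fun j => by by_cases hj : j = i <;> simp [hj, ha]) hsplit
  have hk' (j : Fin (s - 2)) : (Pi.single i (a i) : Fin (s - 2) → ℝ) j = k * a j := by
    simpa [Q19_point19] using hk (point19 s (Pi.single j 1) 0 0)
  have hk1 : k = 1 := (mul_eq_right₀ hi).1 (by simpa using (hk' i).symm)
  exact ⟨i, (ha i).lt_of_ne' hi, fun j hj => by simpa [hj, hk1, eq_comm] using hk' j⟩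

lemma ExtremeRay19.boundary (h : ExtremeRay19 s hs u a m t) (hu : ∀ i, u i ≠ 0)
    (ha : ∀ i, 0 < a i) (hm : m < 0) (hb : 2 * m + (∑ i, u i ^ 2 / a i) * (m ^ 2 + t ^ 2) ≤ 0) :
    2 * m + (∑ i, u i ^ 2 / a i) * (m ^ 2 + t ^ 2) = 0 := by
  have : Nonempty (Fin (s - 2)) := ⟨⟨0, by omega⟩⟩
  set σ := ∑ i, u i ^ 2 / a i
  have hσ : 0 < σ := sum_sq_div_pos hu ha
  by_contra hne
  have hlt := lt_of_le_of_ne hb hne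
  set κ := σ * (m ^ 2 + t ^ 2) / (-2 * m)
  have hmt : 0 < m ^ 2 + t ^ 2 :=
    add_pos_of_pos_of_nonneg (pow_two_pos_of_ne_zero hm.ne) (sq_nonneg t)
  have hκ : 0 < κ := div_pos (mul_pos hσ hmt) (by linarith)
  have hκ1 : κ < 1 := (div_lt_one (by linarith)).2 (by linarith)
  have hsplit (x : Fin s → ℝ) :
      Q19 s hs a m t x = Q19 s hs ((1 - κ) • a) 0 0 x + Q19 s hs (κ • a) m t x := by
    rw [← Q19_add, ← add_smul, sub_add_cancel, one_smul, zero_add, zero_add]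
  have hpsd₁ : PSD19 s hs u ((1 - κ) • a) 0 0 :=
    psd19_iff.2 <| nonnegOnHyperplane_of_nonneg fun i =>
      smul_nonneg (sub_nonneg.2 hκ1.le) (ha i).le
  have hpsd₂ : PSD19 s hs u (κ • a) m t := by
    refine psd19_iff.2 <| nonnegOnHyperplane_of_neg hu (fun i => smul_pos hκ (ha i)) hm ?_
    have : σ / κ * (m ^ 2 + t ^ 2) = -2 * m := by
      rw [div_mul_eq_mul_div, div_eq_iff hκ.ne']
      simp only [κ]
      field_simp [hm.ne]
    rw [sum_sq_div_smul]
    linarith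
  obtain ⟨⟨k, -, hk⟩, -⟩ := h.2.2 _ 0 0 _ m t hpsd₁ hpsd₂ hsplit
  have hk0 : k = 0 := by
    have := hk (point19 s 0 0 1)
    simp only [Q19_point19, quadForm_zero_left] at this
    nlinarith
  obtain ⟨i⟩ := ‹Nonempty (Fin (s - 2))›
  have := hk (point19 s (Pi.single i 1) 0 0)
  simp only [Q19_point19, quadForm_single, hk0, Pi.smul_apply, smul_eq_mul] at this
  nlinarith [ha i]

lemma ExtremeRay19.classify (h : ExtremeRay19 s hs u a m t) (hu : ∀ i, u i ≠ 0) :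
    (∃ i, 0 < a i ∧ (∀ j, j ≠ i → a j = 0) ∧ m = 0 ∧ t = 0) ∨
      ((∀ i, 0 < a i) ∧ m < 0 ∧ 2 * m / (m ^ 2 + t ^ 2) + ∑ i, u i ^ 2 / a i = 0) := by
  have : Nonempty (Fin (s - 2)) := ⟨⟨0, by omega⟩⟩
  rcases (nonnegOnHyperplane_iff hu).1 (psd19_iff.1 h.2.1) with ⟨rfl, rfl, ha⟩ | ⟨ha, hm, hb⟩
  · obtain ⟨i, hi, hj⟩ := h.exists_single ha
    exact Or.inl ⟨i, hi, hj, rfl, rfl⟩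
  · exact Or.inr ⟨ha, hm, (two_mul_div_add_eq_zero_iff hm.ne _).2 (h.boundary hu ha hm hb)⟩

lemma extremeRay19_of_boundary (hu : ∀ i, u i ≠ 0) (ha : ∀ i, 0 < a i) (hm : m < 0)
    (hb : 2 * m + (∑ i, u i ^ 2 / a i) * (m ^ 2 + t ^ 2) = 0) : ExtremeRay19 s hs u a m t := by
  have : Nonempty (Fin (s - 2)) := ⟨⟨0, by omega⟩⟩
  have hpsd : PSD19 s hs u a m t := psd19_iff.2 (nonnegOnHyperplane_of_neg hu ha hm hb.le)
  refine ⟨fun h0 => ?_, hpsd, fun a₁ m₁ t₁ a₂ m₂ t₂ h₁ h₂ hsplit => ?_⟩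
  · have := congrFun h0 (point19 s 0 0 1)
    simp only [Q19_point19, quadForm_zero_left, Pi.zero_apply] at this
    linarith
  set σ := ∑ i, u i ^ 2 / a i
  set v := point19 s (fun i => m * u i / a i) (-(m * σ)) (σ * t)
  have hv : L19 s hs u v := (L19_point19 _ _ _).2 (by rw [sum_mul_mul_div]; ring)
  have hQv : Q19 s hs a m t v = 0 := by
    rw [Q19_point19, quadForm_kernel fun i => (ha i).ne', hb, mul_zero]
  have hray {a' : Fin (s - 2) → ℝ} {m' t' : ℝ} (h' : PSD19 s hs u a' m' t')
      (hv' : Q19 s hs a' m' t' v = 0) :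
      ∃ k : ℝ, 0 ≤ k ∧ ∀ x, Q19 s hs a' m' t' x = k * Q19 s hs a m t x := by
    obtain ⟨k, hk, rfl, rfl, rfl⟩ :=
      (psd19_iff.1 h').eq_smul_of_kernel hu ha hm hb (by rwa [Q19_point19] at hv')
    exact ⟨k, hk, Q19_smul k⟩
  have h₁v := h₁ v hv
  have h₂v := h₂ v hv
  have := hsplit v
  exact ⟨hray h₁ (by linarith), hray h₂ (by linarith)⟩

end Coordinates

theorem stmt_19 (s : ℕ) (hs : 3 ≤ s) (u : Fin (s - 2) → ℝ) (hu : ∀ i, u i ≠ 0) :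
    (∀ (a : Fin (s - 2) → ℝ) (m t : ℝ), ExtremeRay19 s hs u a m t →
      (∃ i, 0 < a i ∧ (∀ j, j ≠ i → a j = 0) ∧ m = 0 ∧ t = 0) ∨
      ((∀ i, 0 < a i) ∧ m < 0 ∧ 2 * m / (m ^ 2 + t ^ 2) + ∑ i, u i ^ 2 / a i = 0)) ∧
    (∀ (a : Fin (s - 2) → ℝ) (m t : ℝ), (∀ i, 0 < a i) → m < 0 →
      2 * m / (m ^ 2 + t ^ 2) + ∑ i, u i ^ 2 / a i = 0 →
      PSD19 s hs u a m t ∧ ExtremeRay19 s hs u a m t) := by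
  refine ⟨fun a m t h => h.classify hu, fun a m t ha hm hb => ?_⟩
  have h : ExtremeRay19 s hs u a m t :=
    extremeRay19_of_boundary hu ha hm ((two_mul_div_add_eq_zero_iff hm.ne _).1 hb)
  exact ⟨h.2.1, h⟩
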